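/- arXiv:1404.4575 — 4 statements merged into one kernel-verified Lean document; each statement's English description precedes it below -/
import Mathlib

section
/- Fix an integer r ≥ 2 and let δ = 1/r. Let H be the hypergraph on a vertex set V of n = r vertices whose only hyperedge is e = V. Then φ*_{H,δ} = 1, and any family (ū)_{u∈V} of mutually orthogonal vectors, each of norm 1/√r, in a real inner product space is a feasible SDP solution for H-SSE with parameter δ whose SDP value equals 2/r. In particular, the integrality gap of the SDP relaxation for H-SSE is at least r/2 = 1/(2δ). -/
open scoped Classical BigOperators RealInnerProductSpace

noncomputable section

/-- A hyperedge `e` is cut by a set `S` if `e ∩ S ≠ ∅` and `e \ S ≠ ∅`. -/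
def Cuts {V : Type*} [DecidableEq V] (S e : Finset V) : Prop :=
  (e ∩ S).Nonempty ∧ (e \ S).Nonempty

/-- Number of hyperedges (indexed by `ι`) cut by `S`. -/
def cutCount {V ι : Type*} [DecidableEq V] [Fintype ι]
    (ed : ι → Finset V) (S : Finset V) : ℕ :=
  (Finset.univ.filter (fun i => Cuts S (ed i))).card

/-- `max_{u,v ∈ e} ‖x u - x v‖²`. -/
def maxDistSq {V H : Type*} [NormedAddCommGroup H] (x : V → H) (e : Finset V) : ℝ :=
  sSup {d : ℝ | ∃ u ∈ e, ∃ v ∈ e, d = ‖x u - x v‖ ^ 2}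

/-- `max_{u,v ∈ e} ‖x u - x v‖`. -/
def maxDist {V H : Type*} [NormedAddCommGroup H] (x : V → H) (e : Finset V) : ℝ :=
  sSup {d : ℝ | ∃ u ∈ e, ∃ v ∈ e, d = ‖x u - x v‖}

/-- `min_{w ∈ e} ‖x w‖`. -/
def minNorm {V H : Type*} [NormedAddCommGroup H] (x : V → H) (e : Finset V) : ℝ :=
  sInf {d : ℝ | ∃ w ∈ e, d = ‖x w‖}

/-- SDP value of a vector solution. -/
def sdpValue {V ι H : Type*} [Fintype ι] [NormedAddCommGroup H]
    (ed : ι → Finset V) (x : V → H) : ℝ :=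
  ∑ i : ι, maxDistSq x (ed i)

/-- Expansion of a set `S` in the hypergraph. -/
def expansion {V ι : Type*} [Fintype V] [DecidableEq V] [Fintype ι]
    (ed : ι → Finset V) (S : Finset V) : ℝ :=
  (cutCount ed S : ℝ) / min (S.card : ℝ) ((Sᶜ : Finset V).card : ℝ)

/-- Small set expansion `φ*_{H,δ}`. -/
def phiStar {V ι : Type*} [Fintype V] [DecidableEq V] [Fintype ι]
    (ed : ι → Finset V) (δ : ℝ) : ℝ :=
  sInf {c : ℝ | ∃ S : Finset V, S.Nonempty ∧ (S.card : ℝ) ≤ δ * Fintype.card V ∧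
                c = expansion ed S}

/-- Feasibility for the SDP relaxation of H-SSE with parameter `δ`. -/
def SDPFeasible {V H : Type*} [Fintype V] [NormedAddCommGroup H] [InnerProductSpace ℝ H]
    (x : V → H) (δ : ℝ) : Prop :=
  (∀ u : V, ∑ v : V, (⟪x u, x v⟫ : ℝ) ≤ δ * (Fintype.card V : ℝ) * ‖x u‖ ^ 2) ∧
  (∑ u : V, ‖x u‖ ^ 2 = 1) ∧
  (∀ u v w : V, ‖x u - x w‖ ^ 2 ≤ ‖x u - x v‖ ^ 2 + ‖x v - x w‖ ^ 2) ∧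
  (∀ u v : V, 0 ≤ (⟪x u, x v⟫ : ℝ) ∧ (⟪x u, x v⟫ : ℝ) ≤ ‖x u‖ ^ 2)

/-- The `ℓ2²`-triangle inequalities for a family of vectors. -/
def L22 {V H : Type*} [NormedAddCommGroup H] [InnerProductSpace ℝ H] (x : V → H) : Prop :=
  (∀ u v w : V, ‖x u - x w‖ ^ 2 ≤ ‖x u - x v‖ ^ 2 + ‖x v - x w‖ ^ 2) ∧
  (∀ u v : V, 0 ≤ (⟪x u, x v⟫ : ℝ) ∧ (⟪x u, x v⟫ : ℝ) ≤ ‖x u‖ ^ 2)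

/-- Probability of an event under a finitely supported distribution. -/
def Pr {Ω : Type*} [Fintype Ω] (μ : Ω → ℝ) (P : Ω → Prop) : ℝ :=
  ∑ ω : Ω, if P ω then μ ω else 0

/-- A finitely supported probability distribution. -/
def IsProbDist {Ω : Type*} [Fintype Ω] (μ : Ω → ℝ) : Prop :=
  (∀ ω, 0 ≤ μ ω) ∧ ∑ ω : Ω, μ ω = 1

/-- `η(u)` for a choice `c` of subsets `e° ⊆ e`. -/
def eta {V ι : Type*} [Fintype ι] (ed c : ι → Finset V) (u : V) : ℝ :=
  ∑ i : ι, if u ∈ c i then Real.logb 2 ((ed i).card) / ((c i).card : ℝ) else 0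

/-- `η̂(H)`: the minimum over all valid choices `(e°)_{e∈E}` of `max_{u∈V} η(u)`. -/
def etaHat {V ι : Type*} [Fintype V] [Fintype ι] (ed : ι → Finset V) : ℝ :=
  sInf {b : ℝ | ∃ c : ι → Finset V, (∀ i, c i ⊆ ed i ∧ (c i).Nonempty) ∧
                b = ⨆ u : V, eta ed c u}

/-!
With the single hyperedge `V` and `δ = 1/r`, the only admissible sets are singletons, each of
which cuts the hyperedge and has expansion `1/min(1, r-1) = 1`. Pairwise orthogonal vectors of
squared norm `1/r` are at squared distance `2/r` from each other, which is the SDP value, and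
orthogonality makes all the feasibility constraints immediate.
-/

section ConstantHyperedges

variable {V ι : Type*} [Fintype V] [DecidableEq V] [Fintype ι]

theorem cutCount_const_univ {S : Finset V} (hS : S.Nonempty) (hS' : S ≠ Finset.univ) :
    cutCount (fun _ : ι => (Finset.univ : Finset V)) S = Fintype.card ι := by
  have hcut : Cuts S (Finset.univ : Finset V) :=
    ⟨by rwa [Finset.univ_inter], by
      rwa [← Finset.compl_eq_univ_sdiff, Finset.nonempty_iff_ne_empty, Ne,
        Finset.compl_eq_empty_iff]⟩
  simp [cutCount, hcut]

theorem expansion_const_univ_singleton (hV : 1 < Fintype.card V) (a : V) :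
    expansion (fun _ : ι => (Finset.univ : Finset V)) {a} = Fintype.card ι := by
  have hne : ({a} : Finset V) ≠ Finset.univ :=
    (Finset.card_lt_iff_ne_univ _).mp (by rwa [Finset.card_singleton])
  have hcompl : (1 : ℝ) ≤ (({a} : Finset V)ᶜ.card : ℕ) := by
    rw [Finset.card_compl, Finset.card_singleton]
    exact_mod_cast (by omega : 1 ≤ Fintype.card V - 1)
  rw [expansion, cutCount_const_univ (Finset.singleton_nonempty a) hne, Finset.card_singleton,
    Nat.cast_one, min_eq_left hcompl, div_one]

theorem phiStar_const_univ (hV : 1 < Fintype.card V) :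
    phiStar (fun _ : ι => (Finset.univ : Finset V)) (1 / Fintype.card V) = Fintype.card ι := by
  have hδ : 1 / (Fintype.card V : ℝ) * Fintype.card V = 1 :=
    one_div_mul_cancel (by positivity)
  obtain ⟨a⟩ := Fintype.card_pos_iff.mp (by omega : 0 < Fintype.card V)
  suffices h : {c : ℝ | ∃ S : Finset V, S.Nonempty ∧
      (S.card : ℝ) ≤ 1 / Fintype.card V * Fintype.card V ∧
      c = expansion (fun _ : ι => (Finset.univ : Finset V)) S} = {(Fintype.card ι : ℝ)} by
    rw [phiStar, h, csInf_singleton]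
  ext c
  simp only [Set.mem_ofPred_eq, Set.mem_singleton_iff, hδ, Nat.cast_le_one]
  constructor
  · rintro ⟨S, hS, hcard, rfl⟩
    obtain ⟨b, rfl⟩ := Finset.card_eq_one.mp (le_antisymm hcard hS.card_pos)
    exact expansion_const_univ_singleton hV b
  · rintro rfl
    exact ⟨{a}, Finset.singleton_nonempty a, (Finset.card_singleton a).le,
      (expansion_const_univ_singleton hV a).symm⟩

end ConstantHyperedges

section OrthogonalFamily

variable {V H : Type*} [NormedAddCommGroup H] [InnerProductSpace ℝ H] {x : V → H}

theorem norm_sub_sq_of_inner_eq_zero {a b : H} (h : ⟪a, b⟫ = 0) :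
    ‖a - b‖ ^ 2 = ‖a‖ ^ 2 + ‖b‖ ^ 2 := by
  rw [norm_sub_sq_real, h]
  ring

theorem sdpFeasible_of_pairwise_inner_eq_zero [Fintype V] {δ : ℝ}
    (horth : Pairwise fun u v => ⟪x u, x v⟫ = 0) (hsum : ∑ u, ‖x u‖ ^ 2 = 1)
    (hδ : 1 ≤ δ * Fintype.card V) : SDPFeasible x δ := by
  have hdist (u v : V) (h : u ≠ v) := norm_sub_sq_of_inner_eq_zero (horth h)
  refine ⟨fun u => ?_, hsum, fun u v w => ?_, fun u v => ?_⟩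
  · rw [Finset.sum_eq_single u (fun v _ hv => horth hv.symm) (by simp),
      real_inner_self_eq_norm_sq]
    exact le_mul_of_one_le_left (sq_nonneg _) hδ
  · by_cases huw : u = w
    · rw [huw, sub_self, norm_zero, zero_pow two_ne_zero]
      positivity
    by_cases huv : u = v
    · simp [huv]
    by_cases hvw : v = w
    · simp [hvw]
    rw [hdist u w huw, hdist u v huv, hdist v w hvw]
    nlinarith [sq_nonneg ‖x v‖]
  · by_cases huv : u = v
    · rw [huv, real_inner_self_eq_norm_sq]
      exact ⟨sq_nonneg _, le_rfl⟩
    · rw [horth huv]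
      exact ⟨le_rfl, sq_nonneg _⟩

theorem maxDistSq_univ_of_pairwise_inner_eq_zero [Fintype V] {c : ℝ}
    (horth : Pairwise fun u v => ⟪x u, x v⟫ = 0) (hnorm : ∀ u, ‖x u‖ ^ 2 = c)
    (hV : 1 < Fintype.card V) : maxDistSq x Finset.univ = 2 * c := by
  have hdist (u v : V) (h : u ≠ v) : ‖x u - x v‖ ^ 2 = 2 * c := by
    rw [norm_sub_sq_of_inner_eq_zero (horth h), hnorm, hnorm]
    ring
  obtain ⟨a, b, hab⟩ := Fintype.exists_pair_of_one_lt_card hV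
  have hc : 0 ≤ c := hnorm a ▸ sq_nonneg _
  refine IsGreatest.csSup_eq
    ⟨⟨a, Finset.mem_univ a, b, Finset.mem_univ b, (hdist a b hab).symm⟩, ?_⟩
  rintro d ⟨u, -, v, -, rfl⟩
  by_cases huv : u = v
  · rw [huv, sub_self, norm_zero, zero_pow two_ne_zero]
    positivity
  · exact (hdist u v huv).le

end OrthogonalFamily

theorem stmt_7 {V : Type*} [Fintype V] [DecidableEq V]
    {H : Type*} [NormedAddCommGroup H] [InnerProductSpace ℝ H]
    (r : ℕ) (hr : 2 ≤ r) (hV : Fintype.card V = r)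
    (x : V → H) (hnorm : ∀ u, ‖x u‖ = 1 / Real.sqrt r)
    (horth : ∀ u v : V, u ≠ v → (⟪x u, x v⟫ : ℝ) = 0) :
    phiStar (fun _ : Unit => (Finset.univ : Finset V)) (1 / r) = 1 ∧
    SDPFeasible x (1 / r) ∧
    sdpValue (fun _ : Unit => (Finset.univ : Finset V)) x = 2 / r ∧
    (r : ℝ) / 2 * sdpValue (fun _ : Unit => (Finset.univ : Finset V)) x ≤
      phiStar (fun _ : Unit => (Finset.univ : Finset V)) (1 / r) := by
  subst hV
  have hr0 : (0 : ℝ) < Fintype.card V := by positivity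
  have hsq (u : V) : ‖x u‖ ^ 2 = 1 / Fintype.card V := by
    rw [hnorm, div_pow, one_pow, Real.sq_sqrt hr0.le]
  have hphi : phiStar (fun _ : Unit => (Finset.univ : Finset V)) (1 / Fintype.card V) = 1 := by
    simpa using phiStar_const_univ (ι := Unit) (by omega : 1 < Fintype.card V)
  have hsdp : sdpValue (fun _ : Unit => (Finset.univ : Finset V)) x = 2 / Fintype.card V := by
    rw [sdpValue, Fintype.sum_unique,
      maxDistSq_univ_of_pairwise_inner_eq_zero (fun u v h => horth u v h) hsq (by omega)]
    ring
  have hfeas : SDPFeasible x (1 / Fintype.card V) :=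
    sdpFeasible_of_pairwise_inner_eq_zero (fun u v h => horth u v h)
      (by simp [hsq, hr0.ne']) (one_div_mul_cancel hr0.ne').ge
  refine ⟨hphi, hfeas, hsdp, ?_⟩
  rw [hsdp, hphi]
  field_simp
  exact le_rfl
end
end

section
/- Let m > 4 be a real number, let n = r = ⌈m⌉, and let V be a set of n vertices. Suppose a random subset S ⊆ V (a probability distribution over subsets of V) satisfies, for some α > 0 and D ≥ 0: (1) Pr(u ∈ S) = α/r for every u ∈ V; (2) Pr(u ∈ S and v ∈ S) ≤ α/(mr) for all u ≠ v in V; and (3) Pr(S ≠ ∅ and S ≠ V) ≤ α·D·(2/r). Then D ≥ ⌈m⌉/4. -/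
open scoped Classical BigOperators RealInnerProductSpace

noncomputable section

/-! Let `X = #S`. By (1) and (2), `𝔼 X = α` and `𝔼 X (X - 1) ≤ α (r - 1) / m ≤ α`.
Since `k - k (k - 1) / 2 ≤ 1` for every integer `k`, and `≤ 0` for `k = r ≥ 3`, the indicator of
the cut event dominates `X - X (X - 1) / 2` (a Bonferroni bound), so the cut probability is at
least `α - α / 2`; comparing with (3) gives `α / 2 ≤ 2 α D / r`. -/

theorem sum_mul_card_filter_eq_sum_Pr {Ω ι : Type*} [Fintype Ω] (μ : Ω → ℝ) (s : Finset ι)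
    (P : ι → Ω → Prop) :
    ∑ ω, μ ω * ((s.filter (P · ω)).card : ℝ) = ∑ i ∈ s, Pr μ (P i) := by
  simp only [Pr, Finset.card_filter, Nat.cast_sum, Finset.mul_sum]
  rw [Finset.sum_comm]
  refine Finset.sum_congr rfl fun i _ => Finset.sum_congr rfl fun ω _ => ?_
  split_ifs <;> simp

theorem sum_mul_card_eq_sum_Pr_mem {V : Type*} [Fintype V] (μ : Finset V → ℝ) :
    ∑ S, μ S * (S.card : ℝ) = ∑ u, Pr μ (fun S => u ∈ S) := by
  rw [← sum_mul_card_filter_eq_sum_Pr]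
  simp

theorem sum_mul_card_offDiag_eq_sum_Pr_mem {V : Type*} [Fintype V] [DecidableEq V]
    (μ : Finset V → ℝ) :
    ∑ S, μ S * (S.offDiag.card : ℝ)
      = ∑ x ∈ (Finset.univ : Finset V).offDiag, Pr μ (fun S => x.1 ∈ S ∧ x.2 ∈ S) := by
  rw [← sum_mul_card_filter_eq_sum_Pr]
  refine Finset.sum_congr rfl fun S _ => ?_
  congr 3
  ext x
  simp only [Finset.mem_filter, Finset.mem_offDiag, Finset.mem_univ, true_and]
  tauto

theorem natCast_sub_mul_pred_div_two_le_one (k : ℕ) : (k : ℝ) - k * (k - 1) / 2 ≤ 1 := by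
  rcases Nat.lt_or_ge k 2 with hk | hk
  · interval_cases k <;> norm_num
  · have : (2 : ℝ) ≤ k := by exact_mod_cast hk
    nlinarith

theorem card_sub_half_card_offDiag_le {V : Type*} [Fintype V] [DecidableEq V]
    (hV : 3 ≤ Fintype.card V) (S : Finset V) :
    (S.card : ℝ) - S.offDiag.card / 2 ≤ if S ≠ ∅ ∧ S ≠ Finset.univ then 1 else 0 := by
  have hoff : (S.offDiag.card : ℝ) = S.card * (S.card - 1) := by
    rw [Finset.offDiag_card, Nat.cast_sub (Nat.le_mul_self _)]
    push_cast
    ring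
  rw [hoff]
  split_ifs with hS
  · exact natCast_sub_mul_pred_div_two_le_one _
  · rcases not_and_or.mp hS with h | h
    · simp [not_not.mp h]
    · rw [not_not.mp h, Finset.card_univ]
      have : (3 : ℝ) ≤ Fintype.card V := by exact_mod_cast hV
      nlinarith

theorem sum_Pr_mem_sub_le_Pr_cut {V : Type*} [Fintype V] [DecidableEq V]
    (hV : 3 ≤ Fintype.card V) (μ : Finset V → ℝ) (hμ : ∀ S, 0 ≤ μ S) :
    ∑ u, Pr μ (fun S => u ∈ S)
        - (∑ x ∈ (Finset.univ : Finset V).offDiag, Pr μ (fun S => x.1 ∈ S ∧ x.2 ∈ S)) / 2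
      ≤ Pr μ (fun S => S ≠ ∅ ∧ S ≠ Finset.univ) := by
  rw [← sum_mul_card_eq_sum_Pr_mem, ← sum_mul_card_offDiag_eq_sum_Pr_mem, Finset.sum_div,
    ← Finset.sum_sub_distrib, Pr]
  refine Finset.sum_le_sum fun S _ => ?_
  have := mul_le_mul_of_nonneg_left (card_sub_half_card_offDiag_le hV S) (hμ S)
  convert this using 1
  · ring
  · split_ifs <;> simp

theorem stmt_8_general {V : Type*} [Fintype V] [DecidableEq V]
    (m : ℝ) (hm : 4 < m) (hV : Fintype.card V = ⌈m⌉₊)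
    (μ : Finset V → ℝ) (hμ : IsProbDist μ)
    (α D : ℝ) (hα : 0 < α)
    (h1 : ∀ u : V, Pr μ (fun S => u ∈ S) = α / (⌈m⌉₊ : ℝ))
    (h2 : ∀ u v : V, u ≠ v →
      Pr μ (fun S => u ∈ S ∧ v ∈ S) ≤ α / (m * (⌈m⌉₊ : ℝ)))
    (h3 : Pr μ (fun S => S ≠ ∅ ∧ S ≠ Finset.univ) ≤ α * D * (2 / (⌈m⌉₊ : ℝ))) :
    (⌈m⌉₊ : ℝ) / 4 ≤ D := by
  set r : ℝ := (⌈m⌉₊ : ℝ)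
  have hmr : r < m + 1 := Nat.ceil_lt_add_one (by linarith)
  have hr : 4 < r := hm.trans_le (Nat.le_ceil m)
  have hV3 : 3 ≤ Fintype.card V := by
    rw [hV]; exact Nat.lt_ceil.mpr (by norm_num; linarith)
  have hcard : (Fintype.card V : ℝ) = r := by rw [hV]
  have hfirst : ∑ u, Pr μ (fun S => u ∈ S) = α := by
    simp only [h1, Finset.sum_const, Finset.card_univ, nsmul_eq_mul, hcard]
    field_simp
  have hsecond : ∑ x ∈ (Finset.univ : Finset V).offDiag, Pr μ (fun S => x.1 ∈ S ∧ x.2 ∈ S)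
      ≤ α * (r - 1) / m := by
    calc _ ≤ ∑ _x ∈ (Finset.univ : Finset V).offDiag, α / (m * r) :=
          Finset.sum_le_sum fun x hx => h2 x.1 x.2 (Finset.mem_offDiag.mp hx).2.2
      _ = α * (r - 1) / m := by
          rw [Finset.sum_const, Finset.offDiag_card, Finset.card_univ, nsmul_eq_mul,
            Nat.cast_sub (Nat.le_mul_self _), Nat.cast_mul, hcard]
          field_simp
  have hpairs : α * (r - 1) / m ≤ α := by
    rw [div_le_iff₀ (by linarith)]; nlinarith
  have hcut := (sum_Pr_mem_sub_le_Pr_cut hV3 μ hμ.1).trans h3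
  have hhalf : α / 2 ≤ α * D * (2 / r) := by linarith
  rw [mul_div_assoc', le_div_iff₀ (by linarith)] at hhalf
  nlinarith

theorem stmt_8 {V : Type*} [Fintype V] [DecidableEq V]
    (m : ℝ) (hm : 4 < m) (hV : Fintype.card V = ⌈m⌉₊)
    (μ : Finset V → ℝ) (hμ : IsProbDist μ)
    (α D : ℝ) (hα : 0 < α) (hD : 0 ≤ D)
    (h1 : ∀ u : V, Pr μ (fun S => u ∈ S) = α / (⌈m⌉₊ : ℝ))
    (h2 : ∀ u v : V, u ≠ v →
      Pr μ (fun S => u ∈ S ∧ v ∈ S) ≤ α / (m * (⌈m⌉₊ : ℝ)))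
    (h3 : Pr μ (fun S => S ≠ ∅ ∧ S ≠ Finset.univ) ≤ α * D * (2 / (⌈m⌉₊ : ℝ))) :
    (⌈m⌉₊ : ℝ) / 4 ≤ D :=
  stmt_8_general m hm hV μ hμ α D hα h1 h2 h3

end
end

section
/- Let H = (V,E) be a hypergraph with |V| = n, let (ū)_{u∈V} be vectors in a real inner product space with Σ_{u∈V} ‖ū‖² = 1, and let sdp = Σ_{e∈E} max_{u,v∈e} ‖ū − v̄‖² > 0. Let S' be a random subset of V such that |S'| < n holds with probability 1, and suppose that for some α > 0 and D > 0: Pr(u ∈ S') ≥ (α/2)‖ū‖² for every u ∈ V, and Pr(e is cut by S') ≤ α·D·max_{u,v∈e} ‖ū − v̄‖² for every e ∈ E. Then Pr(S' ≠ ∅ and |E_cut(S')| < 4·D·sdp·|S'|) ≥ α/(4n). -/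
open scoped Classical BigOperators RealInnerProductSpace

noncomputable section

/-!
Put `c = 4 D sdp`. By linearity of expectation, `E|S'| ≥ (α/2) Σ‖ū‖² = α/2` and
`E|E_cut(S')| ≤ α D sdp = α c / 4`, so `Y = |S'| - |E_cut(S')| / c` has `E Y ≥ α/4`. Since `Y ≤ n`
always and `Y ≤ 0` unless `S' ≠ ∅` and `|E_cut(S')| < c |S'|`, we get `n · Pr(that event) ≥ α/4`.
-/

section FiniteDistribution

variable {Ω : Type*} [Fintype Ω]

theorem sum_Pr_eq_sum_mul_card_filter {κ : Type*} [Fintype κ] (μ : Ω → ℝ) (P : κ → Ω → Prop) :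
    ∑ k, Pr μ (P k) = ∑ ω, μ ω * (Finset.univ.filter fun k => P k ω).card := by
  simp only [Pr]
  rw [Finset.sum_comm]
  refine Finset.sum_congr rfl fun ω _ => ?_
  rw [← Finset.sum_filter, Finset.sum_const, nsmul_eq_mul, mul_comm]

theorem sum_mul_le_mul_Pr {μ : Ω → ℝ} (hμ : ∀ ω, 0 ≤ μ ω) {f : Ω → ℝ} {M : ℝ} {P : Ω → Prop}
    (hM : ∀ ω, P ω → f ω ≤ M) (hP : ∀ ω, ¬ P ω → f ω ≤ 0) :
    ∑ ω, μ ω * f ω ≤ M * Pr μ P := by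
  rw [Pr, Finset.mul_sum]
  refine Finset.sum_le_sum fun ω _ => ?_
  split_ifs with h
  · rw [mul_comm M]
    exact mul_le_mul_of_nonneg_left (hM ω h) (hμ ω)
  · simpa using mul_nonpos_of_nonneg_of_nonpos (hμ ω) (hP ω h)

end FiniteDistribution

section RandomCut

variable {V ι : Type*} [Fintype V] [Fintype ι]

theorem sum_Pr_mem_eq_sum_mul_card (μ : Finset V → ℝ) :
    ∑ u, Pr μ (fun S => u ∈ S) = ∑ S, μ S * S.card := by
  simp [sum_Pr_eq_sum_mul_card_filter]

theorem sum_Pr_cuts_eq_sum_mul_cutCount [DecidableEq V] (μ : Finset V → ℝ) (ed : ι → Finset V) :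
    ∑ i, Pr μ (fun S => Cuts S (ed i)) = ∑ S, μ S * cutCount ed S :=
  sum_Pr_eq_sum_mul_card_filter μ _

theorem le_sum_mul_card_sub_cutCount_div {H : Type*} [NormedAddCommGroup H] [DecidableEq V]
    (ed : ι → Finset V) (x : V → H)
    (hx : ∑ u, ‖x u‖ ^ 2 = 1) (hsdp : 0 < sdpValue ed x) (μ : Finset V → ℝ) {α D : ℝ}
    (hD : 0 < D) (h1 : ∀ u, α / 2 * ‖x u‖ ^ 2 ≤ Pr μ (fun S => u ∈ S))
    (h2 : ∀ i, Pr μ (fun S => Cuts S (ed i)) ≤ α * D * maxDistSq x (ed i)) :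
    α / 4 ≤ ∑ S, μ S * (S.card - cutCount ed S / (4 * D * sdpValue ed x)) := by
  set c := 4 * D * sdpValue ed x
  have hc : 0 < c := by positivity
  have hcard : α / 2 ≤ ∑ S, μ S * S.card :=
    calc α / 2 = ∑ u, α / 2 * ‖x u‖ ^ 2 := by rw [← Finset.mul_sum, hx, mul_one]
      _ ≤ ∑ u, Pr μ (fun S => u ∈ S) := Finset.sum_le_sum fun u _ => h1 u
      _ = ∑ S, μ S * S.card := sum_Pr_mem_eq_sum_mul_card μ
  have hcut : ∑ S, μ S * cutCount ed S ≤ α / 4 * c :=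
    calc ∑ S, μ S * cutCount ed S = ∑ i, Pr μ (fun S => Cuts S (ed i)) :=
          (sum_Pr_cuts_eq_sum_mul_cutCount μ ed).symm
      _ ≤ ∑ i, α * D * maxDistSq x (ed i) := Finset.sum_le_sum fun i _ => h2 i
      _ = α / 4 * c := by rw [← Finset.mul_sum]; simp only [c, sdpValue]; ring
  have hsplit : ∑ S, μ S * (S.card - cutCount ed S / c)
      = ∑ S, μ S * S.card - (∑ S, μ S * cutCount ed S) / c := by
    simp only [mul_sub, Finset.sum_sub_distrib, Finset.sum_div, mul_div_assoc]
  rw [hsplit]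
  have : (∑ S, μ S * cutCount ed S) / c ≤ α / 4 := (div_le_iff₀ hc).mpr hcut
  linarith

end RandomCut

theorem stmt_11_general {V ι H : Type*} [Fintype V] [DecidableEq V] [Fintype ι]
    [NormedAddCommGroup H] [InnerProductSpace ℝ H]
    (ed : ι → Finset V)
    (x : V → H) (hx : ∑ u : V, ‖x u‖ ^ 2 = 1)
    (hsdp : 0 < sdpValue ed x)
    (μ : Finset V → ℝ) (hμ : IsProbDist μ)
    (α D : ℝ) (hD : 0 < D)
    (h1 : ∀ u : V, α / 2 * ‖x u‖ ^ 2 ≤ Pr μ (fun S => u ∈ S))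
    (h2 : ∀ i : ι, Pr μ (fun S => Cuts S (ed i)) ≤ α * D * maxDistSq x (ed i)) :
    α / (4 * (Fintype.card V : ℝ)) ≤
      Pr μ (fun S => S.Nonempty ∧
        (cutCount ed S : ℝ) < 4 * D * sdpValue ed x * S.card) := by
  have hn : (0 : ℝ) < Fintype.card V := by
    have := Finset.nonempty_of_sum_ne_zero (hx ▸ one_ne_zero : ∑ u : V, ‖x u‖ ^ 2 ≠ 0)
    exact_mod_cast Finset.card_pos.mpr this
  set c := 4 * D * sdpValue ed x
  have hc : 0 < c := by positivity
  have hkey : α / 4 ≤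
      Fintype.card V * Pr μ (fun S => S.Nonempty ∧ (cutCount ed S : ℝ) < c * S.card) := by
    refine (le_sum_mul_card_sub_cutCount_div ed x hx hsdp μ hD h1 h2).trans
      (sum_mul_le_mul_Pr hμ.1 (fun S _ => ?_) (fun S hS => ?_))
    · have : (0 : ℝ) ≤ cutCount ed S / c := by positivity
      have : (S.card : ℝ) ≤ Fintype.card V := by exact_mod_cast S.card_le_univ
      linarith
    · rw [sub_nonpos, le_div_iff₀ hc, mul_comm]
      rcases S.eq_empty_or_nonempty with rfl | hne
      · simp
      · exact not_lt.mp fun h => hS ⟨hne, h⟩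
  rw [div_le_iff₀ (by positivity)]
  linarith

theorem stmt_11 {V ι H : Type*} [Fintype V] [DecidableEq V] [Fintype ι]
    [NormedAddCommGroup H] [InnerProductSpace ℝ H]
    (ed : ι → Finset V) (hed : ∀ i, (ed i).Nonempty)
    (x : V → H) (hx : ∑ u : V, ‖x u‖ ^ 2 = 1)
    (hsdp : 0 < sdpValue ed x)
    (μ : Finset V → ℝ) (hμ : IsProbDist μ)
    (hfull : Pr μ (fun S => S.card < Fintype.card V) = 1)
    (α D : ℝ) (hα : 0 < α) (hD : 0 < D)
    (h1 : ∀ u : V, α / 2 * ‖x u‖ ^ 2 ≤ Pr μ (fun S => u ∈ S))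
    (h2 : ∀ i : ι, Pr μ (fun S => Cuts S (ed i)) ≤ α * D * maxDistSq x (ed i)) :
    α / (4 * (Fintype.card V : ℝ)) ≤
      Pr μ (fun S => S.Nonempty ∧
        (cutCount ed S : ℝ) < 4 * D * sdpValue ed x * S.card) :=
  stmt_11_general ed x hx hsdp μ hμ α D hD h1 h2

end
end

section
/- Let ū and v̄ be nonzero vectors in a real inner product space and let β ∈ (0,1). If ‖ū − v̄‖² ≥ β·min(‖ū‖², ‖v̄‖²), then 2 − 2⟨ū, v̄⟩/max(‖ū‖², ‖v̄‖²) ≥ β. -/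
/-! Expanding `‖u - v‖²` with `‖u‖ ≤ ‖v‖`, the hypothesis says `2⟪u, v⟫ ≤ (1 - β)‖u‖² + ‖v‖²`, which is
at most `(2 - β)‖v‖²` because `β ≤ 1`. -/

open scoped RealInnerProductSpace

section

variable {F : Type*} [SeminormedAddCommGroup F] [InnerProductSpace ℝ F]

theorem two_inner_le_of_norm_le {u v : F} {β : ℝ} (hβ : β ≤ 1) (huv : ‖u‖ ≤ ‖v‖)
    (h : β * ‖u‖ ^ 2 ≤ ‖u - v‖ ^ 2) : 2 * ⟪u, v⟫ ≤ (2 - β) * ‖v‖ ^ 2 := by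
  have hsq : ‖u‖ ^ 2 ≤ ‖v‖ ^ 2 := by gcongr
  rw [norm_sub_sq_real] at h
  nlinarith

theorem two_inner_le_mul_max {u v : F} {β : ℝ} (hβ : β ≤ 1)
    (h : β * min (‖u‖ ^ 2) (‖v‖ ^ 2) ≤ ‖u - v‖ ^ 2) :
    2 * ⟪u, v⟫ ≤ (2 - β) * max (‖u‖ ^ 2) (‖v‖ ^ 2) := by
  rcases le_total ‖u‖ ‖v‖ with huv | hvu
  · have hsq : ‖u‖ ^ 2 ≤ ‖v‖ ^ 2 := by gcongr
    rw [min_eq_left hsq] at h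
    rw [max_eq_right hsq]
    exact two_inner_le_of_norm_le hβ huv h
  · have hsq : ‖v‖ ^ 2 ≤ ‖u‖ ^ 2 := by gcongr
    rw [min_eq_right hsq, norm_sub_rev] at h
    rw [max_eq_left hsq, real_inner_comm]
    exact two_inner_le_of_norm_le hβ hvu h

end

theorem stmt_16_general {H : Type*} [NormedAddCommGroup H] [InnerProductSpace ℝ H]
    (u v : H)
    (β : ℝ) (hβ1 : β < 1)
    (h : β * min (‖u‖ ^ 2) (‖v‖ ^ 2) ≤ ‖u - v‖ ^ 2) :
    β ≤ 2 - 2 * (⟪u, v⟫ : ℝ) / max (‖u‖ ^ 2) (‖v‖ ^ 2) := by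
  have hdiv : 2 * ⟪u, v⟫ / max (‖u‖ ^ 2) (‖v‖ ^ 2) ≤ 2 - β :=
    div_le_of_le_mul₀ (le_max_of_le_left (by positivity)) (by linarith)
      (two_inner_le_mul_max hβ1.le h)
  linarith

theorem stmt_16 {H : Type*} [NormedAddCommGroup H] [InnerProductSpace ℝ H]
    (u v : H) (hu : u ≠ 0) (hv : v ≠ 0)
    (β : ℝ) (hβ0 : 0 < β) (hβ1 : β < 1)
    (h : β * min (‖u‖ ^ 2) (‖v‖ ^ 2) ≤ ‖u - v‖ ^ 2) :
    β ≤ 2 - 2 * (⟪u, v⟫ : ℝ) / max (‖u‖ ^ 2) (‖v‖ ^ 2) :=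
  stmt_16_general u v β hβ1 h
end
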